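/- Let γ ≥ 1 and C ≥ 0, and let g : ℝ^d → ℝ^d be continuously differentiable with ‖Dg(x)v‖² ≤ C(1 + ‖x‖)^{γ−1}‖v‖² for all x, v ∈ ℝ^d. Then: (i) ‖g(x) − g(y)‖² ≤ C(1 + ‖x‖ + ‖y‖)^{γ−1}‖x − y‖² for all x, y ∈ ℝ^d; and (ii) ‖g(x)‖² ≤ 2(‖g(0)‖² + C)(1 + ‖x‖)^{γ+1} for all x ∈ ℝ^d. -/

import Mathlib

/-! Restricted to the ball of radius `‖x‖ + ‖y‖`, the derivative of `g` has operator norm at most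
`√(C (1 + ‖x‖ + ‖y‖)^(γ-1))` because `γ ≥ 1` makes the weight monotone, so (i) is the mean value
inequality on that convex ball. Taking `y = 0` in (i), (ii) follows from `(a + b)² ≤ 2(a² + b²)` and
`(1 + t)^(γ-1) t² ≤ (1 + t)^(γ+1)`. -/

open Metric

section

variable {E F : Type*} [NormedAddCommGroup E] [NormedSpace ℝ E]
  [NormedAddCommGroup F] [NormedSpace ℝ F]

theorem ContinuousLinearMap.opNorm_le_sqrt_of_forall_sq_le {L : E →L[ℝ] F} {K : ℝ}
    (h : ∀ v, ‖L v‖ ^ 2 ≤ K * ‖v‖ ^ 2) : ‖L‖ ≤ √K :=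
  L.opNorm_le_bound (Real.sqrt_nonneg K) fun v => by
    calc ‖L v‖ = √(‖L v‖ ^ 2) := (Real.sqrt_sq (norm_nonneg _)).symm
      _ ≤ √(K * ‖v‖ ^ 2) := Real.sqrt_le_sqrt (h v)
      _ = √K * ‖v‖ := by rw [Real.sqrt_mul' K (sq_nonneg _), Real.sqrt_sq (norm_nonneg _)]

theorem Convex.norm_image_sub_sq_le_of_fderiv_sq_le {f : E → F} {s : Set E} {K : ℝ} {x y : E}
    (hs : Convex ℝ s) (hf : ∀ z ∈ s, DifferentiableAt ℝ f z) (hK : 0 ≤ K)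
    (bound : ∀ z ∈ s, ∀ v, ‖fderiv ℝ f z v‖ ^ 2 ≤ K * ‖v‖ ^ 2) (hx : x ∈ s) (hy : y ∈ s) :
    ‖f x - f y‖ ^ 2 ≤ K * ‖x - y‖ ^ 2 := by
  have hlip : ‖f x - f y‖ ≤ √K * ‖x - y‖ :=
    hs.norm_image_sub_le_of_norm_fderiv_le hf
      (fun z hz => (fderiv ℝ f z).opNorm_le_sqrt_of_forall_sq_le (bound z hz)) hy hx
  calc ‖f x - f y‖ ^ 2 ≤ (√K * ‖x - y‖) ^ 2 := pow_le_pow_left₀ (norm_nonneg _) hlip 2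
    _ = K * ‖x - y‖ ^ 2 := by rw [mul_pow, Real.sq_sqrt hK]

end

theorem one_add_rpow_sub_one_mul_sq_le {t γ : ℝ} (ht : 0 ≤ t) :
    (1 + t) ^ (γ - 1) * t ^ 2 ≤ (1 + t) ^ (γ + 1) :=
  calc (1 + t) ^ (γ - 1) * t ^ 2 ≤ (1 + t) ^ (γ - 1) * (1 + t) ^ (2 : ℝ) := by
        rw [Real.rpow_two]; gcongr; linarith
    _ = (1 + t) ^ (γ + 1) := by
        rw [← Real.rpow_add (by linarith)]; ring_nf

theorem stmt_3 {d : ℕ} (γ C : ℝ) (hγ : 1 ≤ γ) (hC : 0 ≤ C)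
    (g : EuclideanSpace ℝ (Fin d) → EuclideanSpace ℝ (Fin d))
    (hg : ContDiff ℝ 1 g)
    (hDg : ∀ x v : EuclideanSpace ℝ (Fin d),
      ‖fderiv ℝ g x v‖ ^ 2 ≤ C * (1 + ‖x‖) ^ (γ - 1) * ‖v‖ ^ 2) :
    (∀ x y : EuclideanSpace ℝ (Fin d),
      ‖g x - g y‖ ^ 2 ≤ C * (1 + ‖x‖ + ‖y‖) ^ (γ - 1) * ‖x - y‖ ^ 2) ∧
    (∀ x : EuclideanSpace ℝ (Fin d),
      ‖g x‖ ^ 2 ≤ 2 * (‖g (0 : EuclideanSpace ℝ (Fin d))‖ ^ 2 + C) * (1 + ‖x‖) ^ (γ + 1)) := by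
  have hlip : ∀ x y : EuclideanSpace ℝ (Fin d),
      ‖g x - g y‖ ^ 2 ≤ C * (1 + ‖x‖ + ‖y‖) ^ (γ - 1) * ‖x - y‖ ^ 2 := by
    intro x y
    refine (convex_closedBall 0 (‖x‖ + ‖y‖)).norm_image_sub_sq_le_of_fderiv_sq_le
      (fun z _ => (hg.differentiable one_ne_zero) z) (by positivity) (fun z hz v => ?_)
      (by simp [norm_nonneg]) (by simp [norm_nonneg])
    rw [mem_closedBall_zero_iff] at hz
    refine (hDg z v).trans ?_
    have hweight : (1 + ‖z‖) ^ (γ - 1) ≤ (1 + ‖x‖ + ‖y‖) ^ (γ - 1) :=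
      Real.rpow_le_rpow (by positivity) (by linarith) (by linarith)
    gcongr
  refine ⟨hlip, fun x => ?_⟩
  have hx := norm_nonneg x
  have hlip0 : ‖g x - g 0‖ ^ 2 ≤ C * ((1 + ‖x‖) ^ (γ - 1) * ‖x‖ ^ 2) := by
    simpa [mul_assoc] using hlip x 0
  have hweight : 1 ≤ (1 + ‖x‖) ^ (γ + 1) := Real.one_le_rpow (by linarith) (by linarith)
  calc ‖g x‖ ^ 2 ≤ (‖g 0‖ + ‖g x - g 0‖) ^ 2 :=
        pow_le_pow_left₀ (norm_nonneg _) (norm_le_norm_add_norm_sub' _ _) 2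
    _ ≤ 2 * (‖g 0‖ ^ 2 + ‖g x - g 0‖ ^ 2) := add_sq_le
    _ ≤ 2 * (‖g 0‖ ^ 2 * (1 + ‖x‖) ^ (γ + 1) + C * (1 + ‖x‖) ^ (γ + 1)) := by
        gcongr
        · exact le_mul_of_one_le_right (sq_nonneg _) hweight
        · exact hlip0.trans (mul_le_mul_of_nonneg_left (one_add_rpow_sub_one_mul_sq_le hx) hC)
    _ = 2 * (‖g 0‖ ^ 2 + C) * (1 + ‖x‖) ^ (γ + 1) := by ring
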